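/- On the unit hyperboloid \(\mathscr{H}\), the solutions \(f\) of the equation \(D_a D_b f + h_{ab} f = 0\) form a 4-dimensional real vector space, isomorphic to the tangent space of the ambient Minkowski space: every constant vector \(v^a\) in Minkowski space determines a solution \(f(\eta) = v^a \eta_a\) restricted to \(\mathscr{H}\), and every solution arises uniquely in this way. -/

import Mathlib

noncomputable section

/-- 4-dimensional Minkowski space, as `ℝ⁴`. -/
abbrev M4 := Fin 4 → ℝ

/-- The diagonal of the Minkowski metric, signature `(-,+,+,+)`. -/
def gd : Fin 4 → ℝ := fun i => if i = 0 then -1 else 1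

/-- The Minkowski inner product. -/
def mink (u v : M4) : ℝ := ∑ i : Fin 4, gd i * u i * v i

/-- The unit timelike hyperboloid `ℋ` of unit spacelike vectors. -/
def Hyp : Set M4 := {η | mink η η = 1}

/-- The tangent space to `ℋ` at `η`: vectors Minkowski-orthogonal to `η`. -/
def Tangent (η : M4) : Set M4 := {u | mink η u = 0}

/-- Orthogonal projection onto the tangent space of `ℋ` at `η`. -/
def proj (η u : M4) : M4 := u - mink η u • η

/-- The Levi-Civita covariant derivative on `ℋ` induced from Minkowski space:
the tangential projection of the ambient directional derivative. -/
def covD (η u : M4) (Y : M4 → M4) : M4 := proj η (fderiv ℝ Y η u)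

/-- The intrinsic Hessian `D_aD_bf` of a scalar field on `ℋ`, evaluated on tangent
vectors `u, w` at `η ∈ ℋ` (using the tangential extension `p ↦ proj p w` of `w`). -/
def Hess (f : M4 → ℝ) (η u w : M4) : ℝ :=
  fderiv ℝ (fun p => fderiv ℝ f p (proj p w)) η u
    - fderiv ℝ f η (proj η (fderiv ℝ (fun p => proj p w) η u))

-- basic mink lemmas
lemma gd_sq (i : Fin 4) : gd i * gd i = 1 := by
  unfold gd; split <;> norm_num

lemma mink_comm (u v : M4) : mink u v = mink v u := by
  unfold mink; exact Finset.sum_congr rfl fun i _ => by ring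

lemma mink_smul_right (a : ℝ) (u v : M4) : mink u (a • v) = a * mink u v := by
  unfold mink; rw [Finset.mul_sum]; exact Finset.sum_congr rfl fun i _ => by
    simp [Pi.smul_apply, smul_eq_mul]; ring

lemma mink_add_right (u v w : M4) : mink u (v + w) = mink u v + mink u w := by
  unfold mink; rw [← Finset.sum_add_distrib]; exact Finset.sum_congr rfl fun i _ => by
    simp [Pi.add_apply]; ring

lemma mink_sub_right (u v w : M4) : mink u (v - w) = mink u v - mink u w := by
  unfold mink; rw [← Finset.sum_sub_distrib]; exact Finset.sum_congr rfl fun i _ => by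
    simp [Pi.sub_apply]; ring

lemma mink_single (x : M4) (i : Fin 4) (a : ℝ) : mink x (Pi.single i a) = gd i * x i * a := by
  unfold mink
  rw [Finset.sum_eq_single i]
  · simp
  · intro j _ hj; simp [Pi.single_apply, hj]
  · simp

-- CLM decomposition along coordinates
lemma clm_eq_sum (L : M4 →L[ℝ] ℝ) (x : M4) : L x = ∑ i, x i * L (Pi.single i 1) := by
  have hx : x = ∑ i, x i • (Pi.single i (1:ℝ) : M4) := by
    ext j; simp [Pi.single_apply, Finset.sum_apply]
  conv_lhs => rw [hx]
  rw [map_sum]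
  exact Finset.sum_congr rfl fun i _ => by rw [map_smul]; simp

-- mink as a CLM in the first argument
def minkCLM (w : M4) : M4 →L[ℝ] ℝ :=
  ∑ i, (gd i * w i) • (ContinuousLinearMap.proj i : M4 →L[ℝ] ℝ)

lemma minkCLM_apply (w p : M4) : minkCLM w p = mink p w := by
  unfold minkCLM mink
  rw [ContinuousLinearMap.sum_apply]
  exact Finset.sum_congr rfl fun i _ => by
    simp [ContinuousLinearMap.smul_apply]; ring

-- derivative of the field p ↦ proj p w
def projD (η w : M4) : M4 →L[ℝ] M4 :=
  -((minkCLM w η) • ContinuousLinearMap.id ℝ M4 + (minkCLM w).smulRight η)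

lemma projD_apply (η w u : M4) : projD η w u = -(mink η w • u) - mink u w • η := by
  simp [projD, minkCLM_apply]
  abel

lemma hasFDerivAt_proj (η w : M4) : HasFDerivAt (fun p => proj p w) (projD η w) η := by
  have h1 : HasFDerivAt (fun p : M4 => minkCLM w p • p)
      ((minkCLM w η) • ContinuousLinearMap.id ℝ M4 + (minkCLM w).smulRight η) η :=
    (minkCLM w).hasFDerivAt.smul (hasFDerivAt_id η)
  have h2 := h1.const_sub w
  have : (fun p : M4 => w - minkCLM w p • p) = fun p => proj p w := by
    funext p; rw [minkCLM_apply]; rfl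
  rwa [this] at h2

lemma proj_self_eq_zero {η : M4} (hη : mink η η = 1) (c : ℝ) : proj η (c • η) = 0 := by
  unfold proj
  rw [mink_smul_right, hη, mul_one]
  abel

lemma mink_proj {η : M4} (hη : mink η η = 1) (x : M4) : mink η (proj η x) = 0 := by
  unfold proj
  rw [mink_sub_right, mink_smul_right, hη, mul_one, sub_self]

lemma Hess_eq (f : M4 → ℝ) (hf : ContDiff ℝ (⊤ : ℕ∞) f) {η u w : M4}
    (hη : mink η η = 1) (hw : mink η w = 0) :
    Hess f η u w = fderiv ℝ (fderiv ℝ f) η u w - mink u w * fderiv ℝ f η η := by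
  have hf1 : Differentiable ℝ f := hf.differentiable (by simp)
  have hdf : HasFDerivAt (fderiv ℝ f) (fderiv ℝ (fderiv ℝ f) η) η :=
    (((hf.fderiv_right (m := 1) (by exact WithTop.coe_le_coe.mpr le_top)).differentiable (by simp)) η).hasFDerivAt
  have hp := hasFDerivAt_proj η w
  have h1 : HasFDerivAt (fun p => fderiv ℝ f p (proj p w))
      ((fderiv ℝ f η).comp (projD η w) + (fderiv ℝ (fderiv ℝ f) η).flip (proj η w)) η :=
    hdf.clm_apply hp
  have hXu : projD η w u = (-(mink u w)) • η := by
    rw [projD_apply, hw]; simp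
  have hpw : proj η w = w := by unfold proj; rw [hw]; simp
  unfold Hess
  rw [hp.fderiv, h1.fderiv, hXu, proj_self_eq_zero hη, map_zero, sub_zero]
  rw [ContinuousLinearMap.add_apply, ContinuousLinearMap.comp_apply, hXu,
    ContinuousLinearMap.flip_apply, hpw, map_smul]
  simp [smul_eq_mul]
  ring

/-- Components of the conserved vector field `V = f η + grad f`. -/
def Vc (f : M4 → ℝ) (i : Fin 4) : M4 → ℝ := fun p =>
  f p * p i + gd i * fderiv ℝ f p (Pi.single i 1) - fderiv ℝ f p p * p i

variable {f : M4 → ℝ}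

lemma hasFDerivAt_Vc (hf : ContDiff ℝ (⊤ : ℕ∞) f) (i : Fin 4) (η : M4) :
    HasFDerivAt (Vc f i)
      ((f η • (ContinuousLinearMap.proj i : M4 →L[ℝ] ℝ) + η i • fderiv ℝ f η)
        + (gd i) • ((fderiv ℝ f η).comp (0 : M4 →L[ℝ] M4)
            + (fderiv ℝ (fderiv ℝ f) η).flip (Pi.single i 1))
        - ((fderiv ℝ f η η) • (ContinuousLinearMap.proj i : M4 →L[ℝ] ℝ)
            + η i • ((fderiv ℝ f η).comp (ContinuousLinearMap.id ℝ M4)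
              + (fderiv ℝ (fderiv ℝ f) η).flip η))) η := by
  have hfη : HasFDerivAt f (fderiv ℝ f η) η := ((hf.differentiable (by simp)) η).hasFDerivAt
  have hdf : HasFDerivAt (fderiv ℝ f) (fderiv ℝ (fderiv ℝ f) η) η :=
    (((hf.fderiv_right (m := 1) (by exact WithTop.coe_le_coe.mpr le_top)).differentiable (by simp)) η).hasFDerivAt
  have hpi : HasFDerivAt (fun p : M4 => p i)
      ((ContinuousLinearMap.proj i : M4 →L[ℝ] ℝ)) η :=
    (ContinuousLinearMap.proj i : M4 →L[ℝ] ℝ).hasFDerivAt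
  have hA := hfη.mul hpi
  have hB := (hdf.clm_apply (hasFDerivAt_const (Pi.single i 1 : M4) η)).const_mul (gd i)
  have hC := (hdf.clm_apply (hasFDerivAt_id η)).mul hpi
  exact (hA.add hB).sub hC

lemma fderiv_Vc_apply (hf : ContDiff ℝ (⊤ : ℕ∞) f) (i : Fin 4) (η u : M4) :
    fderiv ℝ (Vc f i) η u
      = f η * u i + fderiv ℝ f η u * η i + gd i * fderiv ℝ (fderiv ℝ f) η u (Pi.single i 1)
        - (fderiv ℝ (fderiv ℝ f) η u η + fderiv ℝ f η u) * η i - fderiv ℝ f η η * u i := by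
  rw [(hasFDerivAt_Vc hf i η).fderiv]
  simp [ContinuousLinearMap.smul_apply, ContinuousLinearMap.add_apply,
    ContinuousLinearMap.sub_apply, ContinuousLinearMap.comp_apply,
    ContinuousLinearMap.flip_apply, smul_eq_mul]
  ring

lemma mink_dVc (hf : ContDiff ℝ (⊤ : ℕ∞) f) (η u x : M4) :
    mink (fun i => fderiv ℝ (Vc f i) η u) x
      = (f η - fderiv ℝ f η η) * mink u x + fderiv ℝ (fderiv ℝ f) η u x
        - fderiv ℝ (fderiv ℝ f) η u η * mink η x := by
  have step : ∀ i : Fin 4,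
      gd i * fderiv ℝ (Vc f i) η u * x i
        = (f η - fderiv ℝ f η η) * (gd i * u i * x i)
          + x i * fderiv ℝ (fderiv ℝ f) η u (Pi.single i 1)
          - fderiv ℝ (fderiv ℝ f) η u η * (gd i * η i * x i) := by
    intro i
    rw [fderiv_Vc_apply hf]
    linear_combination (fderiv ℝ (fderiv ℝ f) η u (Pi.single i 1) * x i) * gd_sq i
  show (∑ i, gd i * fderiv ℝ (Vc f i) η u * x i) = _
  rw [Finset.sum_congr rfl fun i _ => step i]
  rw [Finset.sum_sub_distrib, Finset.sum_add_distrib, ← Finset.mul_sum, ← Finset.mul_sum,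
    ← clm_eq_sum]
  show _ = (f η - fderiv ℝ f η η) * (∑ i, gd i * u i * x i) + _
      - fderiv ℝ (fderiv ℝ f) η u η * (∑ i, gd i * η i * x i)
  ring

lemma dVc_zero (hf : ContDiff ℝ (⊤ : ℕ∞) f) {η u : M4} (hη : mink η η = 1) (hu : mink η u = 0)
    (hpde : ∀ w ∈ Tangent η, Hess f η u w + mink u w * f η = 0) (i : Fin 4) :
    fderiv ℝ (Vc f i) η u = 0 := by
  set T : M4 := fun i => fderiv ℝ (Vc f i) η u with hT
  have huη : mink u η = 0 := by rw [mink_comm]; exact hu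
  have hTη : mink T η = 0 := by
    rw [hT, mink_dVc hf, hη, huη]
    ring
  have hTw : ∀ w, mink η w = 0 → mink T w = 0 := by
    intro w hw
    have h1 := hpde w hw
    rw [Hess_eq f hf hη hw] at h1
    rw [hT, mink_dVc hf, hw]
    linarith
  have hdecomp : (Pi.single i (gd i) : M4)
      = proj η (Pi.single i (gd i)) + mink η (Pi.single i (gd i)) • η := by
    unfold proj; abel
  have h2 : mink T (Pi.single i (gd i)) = 0 := by
    rw [hdecomp, mink_add_right, mink_smul_right, hTw _ (mink_proj hη _), hTη]
    ring
  have h3 : mink T (Pi.single i (gd i)) = T i := by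
    rw [mink_single]
    linear_combination (T i) * gd_sq i
  have : T i = 0 := by rw [← h3, h2]
  exact this


lemma gd0 : gd 0 = -1 := if_pos rfl
lemma gd1 : gd 1 = 1 := if_neg (by decide)
lemma gd2 : gd 2 = 1 := if_neg (by decide)
lemma gd3 : gd 3 = 1 := if_neg (by decide)

/-- Global smooth parametrization of the hyperboloid by `ℝ³`. -/
def Φ : (Fin 3 → ℝ) → M4 := fun c =>
  ![c 0, Real.sqrt (1 + c 0 ^ 2) * Real.cos (c 1),
    Real.sqrt (1 + c 0 ^ 2) * (Real.sin (c 1) * Real.cos (c 2)),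
    Real.sqrt (1 + c 0 ^ 2) * (Real.sin (c 1) * Real.sin (c 2))]

lemma Φ_hyp (c : Fin 3 → ℝ) : mink (Φ c) (Φ c) = 1 := by
  have hs : Real.sqrt (1 + c 0 ^ 2) ^ 2 = 1 + c 0 ^ 2 := Real.sq_sqrt (by positivity)
  have h1 := Real.sin_sq_add_cos_sq (c 1)
  have h2 := Real.sin_sq_add_cos_sq (c 2)
  unfold mink
  rw [Fin.sum_univ_four, gd0, gd1, gd2, gd3]
  simp only [Φ, Matrix.cons_val_zero, Matrix.cons_val_one, Matrix.head_cons,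
    Matrix.cons_val_two, Matrix.tail_cons, Matrix.cons_val_three]
  linear_combination
    (Real.cos (c 1) ^ 2 + Real.sin (c 1) ^ 2 * Real.cos (c 2) ^ 2
      + Real.sin (c 1) ^ 2 * Real.sin (c 2) ^ 2) * hs
    + (1 + c 0 ^ 2) * Real.sin (c 1) ^ 2 * h2 + (1 + c 0 ^ 2) * h1

lemma Φ_diff : Differentiable ℝ Φ := by
  have hproj : ∀ j : Fin 3, Differentiable ℝ (fun c : Fin 3 → ℝ => c j) := fun j =>
    (ContinuousLinearMap.proj j : (Fin 3 → ℝ) →L[ℝ] ℝ).differentiable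
  have hsq : Differentiable ℝ (fun c : Fin 3 → ℝ => Real.sqrt (1 + c 0 ^ 2)) := by
    intro x
    exact DifferentiableAt.sqrt (by fun_prop) (by positivity)
  have hc1 : Differentiable ℝ (fun c : Fin 3 → ℝ => Real.cos (c 1)) :=
    Real.differentiable_cos.comp (hproj 1)
  have hs1 : Differentiable ℝ (fun c : Fin 3 → ℝ => Real.sin (c 1)) :=
    Real.differentiable_sin.comp (hproj 1)
  have hc2 : Differentiable ℝ (fun c : Fin 3 → ℝ => Real.cos (c 2)) :=
    Real.differentiable_cos.comp (hproj 2)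
  have hs2 : Differentiable ℝ (fun c : Fin 3 → ℝ => Real.sin (c 2)) :=
    Real.differentiable_sin.comp (hproj 2)
  rw [differentiable_pi]
  intro i
  fin_cases i <;>
    simp only [Φ, Matrix.cons_val_zero, Matrix.cons_val_one, Matrix.head_cons,
      Matrix.cons_val_two, Matrix.tail_cons, Matrix.cons_val_three, Fin.isValue]
  · exact hproj 0
  · exact hsq.mul hc1
  · exact hsq.mul (hs1.mul hc2)
  · exact hsq.mul (hs1.mul hs2)

lemma Φ_tangent (c u : Fin 3 → ℝ) : mink (Φ c) (fderiv ℝ Φ c u) = 0 := by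
  set Y' := fderiv ℝ Φ c with hY'
  have hΦd : HasFDerivAt Φ Y' c := (Φ_diff c).hasFDerivAt
  have hYi : ∀ i : Fin 4, HasFDerivAt (fun p => Φ p i)
      ((ContinuousLinearMap.proj i).comp Y') c := fun i =>
    (ContinuousLinearMap.proj i : M4 →L[ℝ] ℝ).hasFDerivAt.comp c hΦd
  have hD : HasFDerivAt (fun p => ∑ i : Fin 4, gd i * Φ p i * Φ p i)
      (∑ i : Fin 4, ((gd i * Φ c i) • ((ContinuousLinearMap.proj i).comp Y')
        + Φ c i • (gd i • ((ContinuousLinearMap.proj i).comp Y')))) c := by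
    refine HasFDerivAt.fun_sum fun i _ => ?_
    exact ((hYi i).const_mul (gd i)).mul (hYi i)
  have hFc : (fun p => ∑ i : Fin 4, gd i * Φ p i * Φ p i) = fun _ => (1:ℝ) := by
    funext p; exact Φ_hyp p
  rw [hFc] at hD
  have h0 := hD.fderiv
  rw [fderiv_fun_const] at h0
  have h0u : (∑ i : Fin 4, ((gd i * Φ c i) • ((ContinuousLinearMap.proj i).comp Y')
        + Φ c i • (gd i • ((ContinuousLinearMap.proj i).comp Y')))) u = 0 := by
    rw [← h0]; rfl
  rw [ContinuousLinearMap.sum_apply] at h0u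
  simp only [ContinuousLinearMap.add_apply, ContinuousLinearMap.smul_apply,
    ContinuousLinearMap.comp_apply, ContinuousLinearMap.proj_apply, smul_eq_mul] at h0u
  have h2 : (∑ i : Fin 4, (gd i * Φ c i * Y' u i + Φ c i * (gd i * Y' u i)))
      = ∑ i : Fin 4, 2 * (gd i * Φ c i * Y' u i) := by
    exact Finset.sum_congr rfl fun i _ => by ring
  rw [h2, ← Finset.mul_sum] at h0u
  show (∑ i : Fin 4, gd i * Φ c i * Y' u i) = 0
  linarith

lemma Φ_surj (η : M4) (hη : mink η η = 1) : ∃ c, Φ c = η := by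
  set a := η 0 with ha
  set r := Real.sqrt (1 + a ^ 2) with hrdef
  have hr0 : 0 < r := Real.sqrt_pos.mpr (by positivity)
  have hrne : r ≠ 0 := ne_of_gt hr0
  have hr2 : r ^ 2 = 1 + a ^ 2 := Real.sq_sqrt (by positivity)
  have hsum : η 1 ^ 2 + η 2 ^ 2 + η 3 ^ 2 = r ^ 2 := by
    unfold mink at hη
    rw [Fin.sum_univ_four, gd0, gd1, gd2, gd3] at hη
    nlinarith [hη, hr2]
  set ρ := Real.sqrt (η 2 ^ 2 + η 3 ^ 2) with hρdef
  have hρ0 : 0 ≤ ρ := Real.sqrt_nonneg _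
  have hρ2 : ρ ^ 2 = η 2 ^ 2 + η 3 ^ 2 := Real.sq_sqrt (by positivity)
  have h1le : -1 ≤ η 1 / r := by
    rw [le_div_iff₀ hr0]
    nlinarith [sq_nonneg (η 2), sq_nonneg (η 3), sq_nonneg (η 1 + r)]
  have h2le : η 1 / r ≤ 1 := by
    rw [div_le_iff₀ hr0]
    nlinarith [sq_nonneg (η 2), sq_nonneg (η 3), sq_nonneg (η 1 - r)]
  set s := Real.arccos (η 1 / r) with hsdef
  have hcoss : Real.cos s = η 1 / r := Real.cos_arccos h1le h2le
  have hsins : Real.sin s = ρ / r := by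
    rw [hsdef, Real.sin_arccos]
    have he : 1 - (η 1 / r) ^ 2 = (ρ / r) ^ 2 := by
      field_simp
      nlinarith [hsum, hρ2]
    rw [he, Real.sqrt_sq (by positivity)]
  obtain ⟨t, hct, hst⟩ : ∃ t, ρ * Real.cos t = η 2 ∧ ρ * Real.sin t = η 3 := by
    by_cases hρz : ρ = 0
    · have hz2 : η 2 = 0 := by nlinarith [hρ2, sq_nonneg (η 2), sq_nonneg (η 3)]
      have hz3 : η 3 = 0 := by nlinarith [hρ2, sq_nonneg (η 2), sq_nonneg (η 3)]
      exact ⟨0, by rw [hρz, hz2]; ring, by rw [hρz, hz3]; ring⟩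
    · set z : ℂ := Complex.mk (η 2) (η 3) with hzdef
      have hre : z.re = η 2 := rfl
      have him : z.im = η 3 := rfl
      have habs : ‖z‖ = ρ := by
        rw [Complex.norm_def, Complex.normSq_apply, hre, him, hρdef]
        ring_nf
      have hzne : z ≠ 0 := by
        intro h
        rw [h] at habs
        simp at habs
        exact hρz habs.symm
      refine ⟨Complex.arg z, ?_, ?_⟩
      · rw [Complex.cos_arg hzne, habs, hre]
        field_simp
      · rw [Complex.sin_arg, habs, him]
        field_simp
  refine ⟨![a, s, t], ?_⟩
  funext i
  fin_cases i <;>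
    simp only [Φ, Matrix.cons_val_zero, Matrix.cons_val_one, Matrix.head_cons,
      Matrix.cons_val_two, Matrix.tail_cons, Matrix.cons_val_three, Fin.isValue]
  · exact ha.symm
  · show r * Real.cos s = η 1
    rw [hcoss, mul_comm, div_mul_cancel₀ _ hrne]
  · show r * (Real.sin s * Real.cos t) = η 2
    rw [hsins, show ρ / r * Real.cos t = ρ * Real.cos t / r from by ring, hct,
      mul_comm, div_mul_cancel₀ _ hrne]
  · show r * (Real.sin s * Real.sin t) = η 3
    rw [hsins, show ρ / r * Real.sin t = ρ * Real.sin t / r from by ring, hst,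
      mul_comm, div_mul_cancel₀ _ hrne]

lemma mink_V_self {f : M4 → ℝ} {η : M4} (hη : mink η η = 1) :
    mink (fun i => Vc f i η) η = f η := by
  have step : ∀ i : Fin 4, gd i * Vc f i η * η i
      = f η * (gd i * η i * η i) + η i * (fderiv ℝ f η (Pi.single i 1))
        - fderiv ℝ f η η * (gd i * η i * η i) := by
    intro i
    unfold Vc
    linear_combination (fderiv ℝ f η (Pi.single i 1) * η i) * gd_sq i
  show (∑ i, gd i * Vc f i η * η i) = f η
  rw [Finset.sum_congr rfl fun i _ => step i]
  rw [Finset.sum_sub_distrib, Finset.sum_add_distrib, ← Finset.mul_sum, ← Finset.mul_sum,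
    ← clm_eq_sum]
  have hS : (∑ i : Fin 4, gd i * η i * η i) = 1 := hη
  rw [hS]
  ring

lemma exists_v (f : M4 → ℝ) (hf : ContDiff ℝ (⊤ : ℕ∞) f)
    (hpde : ∀ η ∈ Hyp, ∀ u ∈ Tangent η, ∀ w ∈ Tangent η,
      Hess f η u w + mink u w * f η = 0) :
    ∀ η ∈ Hyp, f η = mink (fun i => Vc f i (Φ 0)) η := by
  have hVdiff : ∀ i, Differentiable ℝ (Vc f i) := fun i x =>
    (hasFDerivAt_Vc hf i x).differentiableAt
  have hWconst : ∀ (i : Fin 4) (c : Fin 3 → ℝ), Vc f i (Φ c) = Vc f i (Φ 0) := by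
    intro i c
    have hW : Differentiable ℝ (fun c => Vc f i (Φ c)) := (hVdiff i).comp Φ_diff
    have hW0 : ∀ c, fderiv ℝ (fun c => Vc f i (Φ c)) c = 0 := by
      intro c
      have hcomp : fderiv ℝ (Vc f i ∘ Φ) c = (fderiv ℝ (Vc f i) (Φ c)).comp (fderiv ℝ Φ c) :=
        fderiv_comp (x := c) ((hVdiff i) (Φ c)) (Φ_diff c)
      ext u
      have heval : fderiv ℝ (fun c => Vc f i (Φ c)) c u
          = fderiv ℝ (Vc f i) (Φ c) (fderiv ℝ Φ c u) := by
        rw [show (fun c => Vc f i (Φ c)) = Vc f i ∘ Φ from rfl, hcomp]; rfl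
      rw [heval, dVc_zero hf (Φ_hyp c) (Φ_tangent c u)
        (fun w hw => hpde (Φ c) (Φ_hyp c) _ (Φ_tangent c u) w hw) i]
      simp
    exact is_const_of_fderiv_eq_zero hW hW0 c 0
  intro η hη
  obtain ⟨c, rfl⟩ := Φ_surj η hη
  have hfun : (fun i => Vc f i (Φ 0)) = fun i => Vc f i (Φ c) :=
    funext fun i => (hWconst i c).symm
  rw [hfun, mink_V_self (Φ_hyp c)]

lemma part1 : ∀ v : M4, ∀ η ∈ Hyp, ∀ u ∈ Tangent η, ∀ w ∈ Tangent η,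
    Hess (fun p => mink v p) η u w + mink u w * mink v η = 0 := by
  intro v η hη u hu w hw
  have hfe : (fun p => mink v p) = ⇑(minkCLM v) := funext fun p => by
    rw [minkCLM_apply, mink_comm]
  have hfc : ContDiff ℝ (⊤ : ℕ∞) (fun p => mink v p) := by
    rw [hfe]; exact (minkCLM v).contDiff
  rw [Hess_eq _ hfc hη hw]
  have hd1 : fderiv ℝ (fun p => mink v p) = fun _ => minkCLM v := by
    rw [hfe]; funext x; exact (minkCLM v).fderiv
  rw [hd1]
  have h2 : fderiv ℝ (fun _ : M4 => minkCLM v) η = 0 := fderiv_const_apply _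
  rw [h2]
  simp only [ContinuousLinearMap.zero_apply]
  rw [minkCLM_apply, mink_comm η v]
  ring

-- four test points for uniqueness
lemma mem_p1 : mink ![(0:ℝ),1,0,0] ![(0:ℝ),1,0,0] = 1 := by
  show (∑ i : Fin 4, _) = 1
  rw [Fin.sum_univ_four, gd0, gd1, gd2, gd3]
  norm_num [Matrix.cons_val_two, Matrix.cons_val_three, Matrix.tail_cons, Matrix.head_cons]

lemma mem_p2 : mink ![(0:ℝ),0,1,0] ![(0:ℝ),0,1,0] = 1 := by
  show (∑ i : Fin 4, _) = 1
  rw [Fin.sum_univ_four, gd0, gd1, gd2, gd3]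
  norm_num [Matrix.cons_val_two, Matrix.cons_val_three, Matrix.tail_cons, Matrix.head_cons]

lemma mem_p3 : mink ![(0:ℝ),0,0,1] ![(0:ℝ),0,0,1] = 1 := by
  show (∑ i : Fin 4, _) = 1
  rw [Fin.sum_univ_four, gd0, gd1, gd2, gd3]
  norm_num [Matrix.cons_val_two, Matrix.cons_val_three, Matrix.tail_cons, Matrix.head_cons]

lemma mem_p4 : mink ![(1:ℝ),Real.sqrt 2,0,0] ![(1:ℝ),Real.sqrt 2,0,0] = 1 := by
  show (∑ i : Fin 4, _) = 1
  rw [Fin.sum_univ_four, gd0, gd1, gd2, gd3]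
  have : Real.sqrt 2 * Real.sqrt 2 = 2 := Real.mul_self_sqrt (by norm_num)
  norm_num [this, Matrix.cons_val_two, Matrix.cons_val_three, Matrix.tail_cons, Matrix.head_cons]

lemma mink_p1 (y : M4) : mink y ![(0:ℝ),1,0,0] = y 1 := by
  show (∑ i : Fin 4, _) = y 1
  rw [Fin.sum_univ_four, gd0, gd1, gd2, gd3]
  norm_num [Matrix.cons_val_two, Matrix.cons_val_three, Matrix.tail_cons, Matrix.head_cons]

lemma mink_p2 (y : M4) : mink y ![(0:ℝ),0,1,0] = y 2 := by
  show (∑ i : Fin 4, _) = y 2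
  rw [Fin.sum_univ_four, gd0, gd1, gd2, gd3]
  norm_num [Matrix.cons_val_two, Matrix.cons_val_three, Matrix.tail_cons, Matrix.head_cons]

lemma mink_p3 (y : M4) : mink y ![(0:ℝ),0,0,1] = y 3 := by
  show (∑ i : Fin 4, _) = y 3
  rw [Fin.sum_univ_four, gd0, gd1, gd2, gd3]
  norm_num [Matrix.cons_val_two, Matrix.cons_val_three, Matrix.tail_cons, Matrix.head_cons]

lemma mink_p4 (y : M4) : mink y ![(1:ℝ),Real.sqrt 2,0,0] = Real.sqrt 2 * y 1 - y 0 := by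
  show (∑ i : Fin 4, _) = _
  rw [Fin.sum_univ_four, gd0, gd1, gd2, gd3]
  norm_num [Matrix.cons_val_two, Matrix.cons_val_three, Matrix.tail_cons, Matrix.head_cons]
  ring

lemma mink_ext {y v : M4} (h : ∀ η, mink η η = 1 → mink y η = mink v η) : y = v := by
  have h1 : y 1 = v 1 := by
    have := h _ mem_p1; rwa [mink_p1, mink_p1] at this
  have h2 : y 2 = v 2 := by
    have := h _ mem_p2; rwa [mink_p2, mink_p2] at this
  have h3 : y 3 = v 3 := by
    have := h _ mem_p3; rwa [mink_p3, mink_p3] at this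
  have h0 : y 0 = v 0 := by
    have h4 := h _ mem_p4
    rw [mink_p4, mink_p4, h1] at h4
    linarith
  funext i
  fin_cases i
  · exact h0
  · exact h1
  · exact h2
  · exact h3


/-- The solutions of `D_aD_bf + h_{ab}f = 0` on the unit hyperboloid
form a 4-dimensional space isomorphic to the ambient Minkowski vector space: every
constant vector `v` gives the solution `f(η) = v·η`, and every (smooth, ambiently
extended) solution arises from a unique such `v`. -/
theorem translation_functions_are_linear :
    (∀ v : M4, ∀ η ∈ Hyp, ∀ u ∈ Tangent η, ∀ w ∈ Tangent η,
      Hess (fun p => mink v p) η u w + mink u w * mink v η = 0) ∧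
    (∀ f : M4 → ℝ, ContDiff ℝ (⊤ : ℕ∞) f →
      (∀ η ∈ Hyp, ∀ u ∈ Tangent η, ∀ w ∈ Tangent η,
        Hess f η u w + mink u w * f η = 0) →
      ∃! v : M4, ∀ η ∈ Hyp, f η = mink v η) := by
  constructor
  · exact part1
  · intro f hf hpde
    refine ⟨fun i => Vc f i (Φ 0), exists_v f hf hpde, ?_⟩
    intro y hy
    apply mink_ext
    intro η hη
    rw [← hy η hη, exists_v f hf hpde η hη]
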